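/- For every p ∈ O, all u, v ∈ E, and every w ∈ E, h(f(p))( Df(p)(Γ_M(p)(u,v)) − Γ_N(f(p))(Df(p)u, Df(p)v) − D²f(p)(u,v), Df(p)w ) = 0; that is, the vector Df(p)(Γ_M(p)(u,v)) − Γ_N(f(p))(Df(p)u, Df(p)v) − D²f(p)(u,v) ∈ F is h(f(p))-orthogonal to the image of Df(p). -/

import Mathlib

/-!
Differentiating `g(v, w) = h(Df v, Df w)` in the direction `u` gives
`Dh(Df u)(Df v, Df w) + h(D²f(u, v), Df w) + h(Df v, D²f(u, w))`. In the Koszul combination of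
three such terms, the `Dh` parts assemble into the Koszul combination for `h`, and by the symmetry
of `h` and of `D²f` all second-derivative terms cancel except `2 h(D²f(u, v), Df w)`. Comparing
the Koszul formulas for `g` and `h` then gives the orthogonality.
-/

open Topology ContinuousLinearMap

section Pullback

variable {𝕜 : Type*} [NontriviallyNormedField 𝕜]
  {X E F G H : Type*} [NormedAddCommGroup X] [NormedSpace 𝕜 X]
  [NormedAddCommGroup E] [NormedSpace 𝕜 E] [NormedAddCommGroup F] [NormedSpace 𝕜 F]
  [NormedAddCommGroup G] [NormedSpace 𝕜 G] [NormedAddCommGroup H] [NormedSpace 𝕜 H]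

theorem differentiable_flip : Differentiable 𝕜 (fun T : E →L[𝕜] F →L[𝕜] G => T.flip) :=
  (flipₗᵢ 𝕜 E F G).toContinuousLinearEquiv.toContinuousLinearMap.differentiable

theorem DifferentiableAt.clm_bilinearComp {B : X → F →L[𝕜] G →L[𝕜] H} {A : X → E →L[𝕜] F}
    {C : X → E →L[𝕜] G} {x : X} (hB : DifferentiableAt 𝕜 B x) (hA : DifferentiableAt 𝕜 A x)
    (hC : DifferentiableAt 𝕜 C x) :
    DifferentiableAt 𝕜 (fun y => (B y).bilinearComp (A y) (C y)) x := by
  have hBA : DifferentiableAt 𝕜 (fun y => ((B y).comp (A y)).flip) x :=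
    DifferentiableAt.comp (𝕜 := 𝕜) (f := fun y => (B y).comp (A y))
      (g := fun T : E →L[𝕜] G →L[𝕜] H => T.flip) x
      differentiable_flip.differentiableAt (hB.clm_comp hA)
  exact DifferentiableAt.comp (𝕜 := 𝕜) (f := fun y => ((B y).comp (A y)).flip.comp (C y))
    (g := fun T : E →L[𝕜] E →L[𝕜] H => T.flip) x
    differentiable_flip.differentiableAt (hBA.clm_comp hC)

theorem fderiv_apply_apply {P : X → E →L[𝕜] F →L[𝕜] G} {x : X} (hP : DifferentiableAt 𝕜 P x)
    (u : X) (v : E) (w : F) :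
    fderiv 𝕜 P x u v w = fderiv 𝕜 (fun y => P y v w) x u := by
  rw [fderiv_clm_apply (hP.clm_apply (differentiableAt_const v)) (differentiableAt_const w),
    fderiv_clm_apply hP (differentiableAt_const v)]
  simp

noncomputable def pullbackForm (h : F → F →L[𝕜] F →L[𝕜] G) (f : E → F) (x : E) :
    E →L[𝕜] E →L[𝕜] G :=
  (h (f x)).bilinearComp (fderiv 𝕜 f x) (fderiv 𝕜 f x)

@[simp]
theorem pullbackForm_apply (h : F → F →L[𝕜] F →L[𝕜] G) (f : E → F) (x a b : E) :
    pullbackForm h f x a b = h (f x) (fderiv 𝕜 f x a) (fderiv 𝕜 f x b) :=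
  rfl

theorem fderiv_pullbackForm_apply {h : F → F →L[𝕜] F →L[𝕜] G} {f : E → F} {p : E}
    (hh : DifferentiableAt 𝕜 h (f p)) (hf : DifferentiableAt 𝕜 f p)
    (hf' : DifferentiableAt 𝕜 (fderiv 𝕜 f) p) (u v w : E) :
    fderiv 𝕜 (pullbackForm h f) p u v w
      = fderiv 𝕜 h (f p) (fderiv 𝕜 f p u) (fderiv 𝕜 f p v) (fderiv 𝕜 f p w)
        + h (f p) (fderiv 𝕜 (fderiv 𝕜 f) p u v) (fderiv 𝕜 f p w)
        + h (f p) (fderiv 𝕜 f p v) (fderiv 𝕜 (fderiv 𝕜 f) p u w) := by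
  have hhf : HasFDerivAt (fun y => h (f y)) _ p :=
    HasFDerivAt.comp (g := h) p hh.hasFDerivAt hf.hasFDerivAt
  have hDf_apply (a : E) := hf'.hasFDerivAt.clm_apply (hasFDerivAt_const a p)
  have hP : DifferentiableAt 𝕜 (pullbackForm h f) p :=
    (DifferentiableAt.comp (g := h) p hh hf).clm_bilinearComp hf' hf'
  rw [fderiv_apply_apply hP]
  simp only [pullbackForm_apply]
  rw [((hhf.clm_apply (hDf_apply v)).clm_apply (hDf_apply w)).fderiv]
  simp only [add_apply, comp_apply, flip_apply, zero_apply, map_zero, zero_add]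
  abel

def koszul (D : E →L[𝕜] E →L[𝕜] E →L[𝕜] G) (u v w : E) : G :=
  D u v w + D v u w - D w u v

end Pullback

theorem koszul_fderiv_pullbackForm {𝕜 : Type*} [RCLike 𝕜] {E F G : Type*}
    [NormedAddCommGroup E] [NormedSpace 𝕜 E] [NormedAddCommGroup F] [NormedSpace 𝕜 F]
    [NormedAddCommGroup G] [NormedSpace 𝕜 G]
    {h : F → F →L[𝕜] F →L[𝕜] G} {f : E → F} {p : E}
    (hh : DifferentiableAt 𝕜 h (f p)) (hf : ContDiffAt 𝕜 2 f p)
    (hsymm : ∀ a b, h (f p) a b = h (f p) b a) (u v w : E) :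
    koszul (fderiv 𝕜 (pullbackForm h f) p) u v w
      = koszul (fderiv 𝕜 h (f p)) (fderiv 𝕜 f p u) (fderiv 𝕜 f p v) (fderiv 𝕜 f p w)
        + (2 : 𝕜) • h (f p) (fderiv 𝕜 (fderiv 𝕜 f) p u v) (fderiv 𝕜 f p w) := by
  have hD2f_symm : IsSymmSndFDerivAt 𝕜 f p := hf.isSymmSndFDerivAt (by simp)
  have hDf : DifferentiableAt 𝕜 (fderiv 𝕜 f) p :=
    (hf.fderiv_right (m := 1) le_rfl).differentiableAt one_ne_zero
  simp only [koszul, fderiv_pullbackForm_apply hh (hf.differentiableAt (by norm_num)) hDf,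
    hD2f_symm.eq v u, hD2f_symm.eq w u, hD2f_symm.eq w v,
    hsymm (fderiv 𝕜 f p v) (fderiv 𝕜 (fderiv 𝕜 f) p u w)]
  module

theorem pullback_christoffel_orthogonal_general
    {E F : Type*}
    [NormedAddCommGroup E] [InnerProductSpace ℝ E]
    [NormedAddCommGroup F] [InnerProductSpace ℝ F]
    (O : Set E) (V : Set F) (hO : IsOpen O) (hV : IsOpen V)
    (f : E → F) (hf : ContDiffOn ℝ (⊤ : ℕ∞) f O) (hfO : Set.MapsTo f O V)
    (h : F → (F →L[ℝ] F →L[ℝ] ℝ)) (hh : ContDiffOn ℝ (⊤ : ℕ∞) h V)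
    (hhsymm : ∀ q ∈ V, ∀ a b : F, h q a b = h q b a)
    (g : E → (E →L[ℝ] E →L[ℝ] ℝ))
    (hgdef : ∀ p ∈ O, ∀ u v : E, g p u v = h (f p) (fderiv ℝ f p u) (fderiv ℝ f p v))
    (ΓM : E → (E →L[ℝ] E →L[ℝ] E))
    (hKoszulM : ∀ p ∈ O, ∀ u v w : E,
      g p (ΓM p u v) w
        = (1 / 2) * ((fderiv ℝ g p u) v w + (fderiv ℝ g p v) u w - (fderiv ℝ g p w) u v))
    (ΓN : F → (F →L[ℝ] F →L[ℝ] F))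
    (hKoszulN : ∀ q ∈ V, ∀ a b c : F,
      h q (ΓN q a b) c
        = (1 / 2) * ((fderiv ℝ h q a) b c + (fderiv ℝ h q b) a c - (fderiv ℝ h q c) a b)) :
    ∀ p ∈ O, ∀ u v : E, ∀ w : E,
      h (f p)
          (fderiv ℝ f p (ΓM p u v)
            - ΓN (f p) (fderiv ℝ f p u) (fderiv ℝ f p v)
            - fderiv ℝ (fderiv ℝ f) p u v)
          (fderiv ℝ f p w) = 0 := by
  intro p hp u v w
  have hfp : f p ∈ V := hfO hp
  have hg : g =ᶠ[𝓝 p] pullbackForm h f := by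
    filter_upwards [hO.mem_nhds hp] with x hx
    ext a b
    exact hgdef x hx a b
  have hK := koszul_fderiv_pullbackForm
    ((hh.contDiffAt (hV.mem_nhds hfp)).differentiableAt (by simp))
    ((hf.contDiffAt (hO.mem_nhds hp)).of_le (WithTop.coe_le_coe.2 le_top))
    (hhsymm _ hfp) u v w
  have hM := hKoszulM p hp u v w
  rw [hgdef p hp, hg.fderiv_eq] at hM
  have hN := hKoszulN (f p) hfp (fderiv ℝ f p u) (fderiv ℝ f p v) (fderiv ℝ f p w)
  simp only [koszul, smul_eq_mul] at hK
  simp only [map_sub, sub_apply]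
  linear_combination hM - hN + (1 / 2 : ℝ) * hK

/-- **The Gauss-type orthogonality relation.**
Under the hypotheses of the pullback computation, for every `p ∈ O`, `u, v ∈ E` and
every `w ∈ E`, the vector `Df p (Γ_M p u v) − Γ_N (f p) (Df p u) (Df p v) − D²f p (u,v)`
is `h (f p)`-orthogonal to the image of `Df p`. -/
theorem pullback_christoffel_orthogonal
    {E F : Type*}
    [NormedAddCommGroup E] [InnerProductSpace ℝ E] [CompleteSpace E]
    [NormedAddCommGroup F] [InnerProductSpace ℝ F] [CompleteSpace F]
    (O : Set E) (V : Set F) (hO : IsOpen O) (hV : IsOpen V)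
    (f : E → F) (hf : ContDiffOn ℝ (⊤ : ℕ∞) f O) (hfO : Set.MapsTo f O V)
    (hImm : ∀ p ∈ O, Function.Injective (fderiv ℝ f p))
    (h : F → (F →L[ℝ] F →L[ℝ] ℝ)) (hh : ContDiffOn ℝ (⊤ : ℕ∞) h V)
    (hhsymm : ∀ q ∈ V, ∀ a b : F, h q a b = h q b a)
    (g : E → (E →L[ℝ] E →L[ℝ] ℝ))
    (hgdef : ∀ p ∈ O, ∀ u v : E, g p u v = h (f p) (fderiv ℝ f p u) (fderiv ℝ f p v))
    (ΓM : E → (E →L[ℝ] E →L[ℝ] E)) (hΓM : ContDiffOn ℝ (⊤ : ℕ∞) ΓM O)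
    (hΓMsymm : ∀ p ∈ O, ∀ u v : E, ΓM p u v = ΓM p v u)
    (hKoszulM : ∀ p ∈ O, ∀ u v w : E,
      g p (ΓM p u v) w
        = (1 / 2) * ((fderiv ℝ g p u) v w + (fderiv ℝ g p v) u w - (fderiv ℝ g p w) u v))
    (ΓN : F → (F →L[ℝ] F →L[ℝ] F)) (hΓN : ContDiffOn ℝ (⊤ : ℕ∞) ΓN V)
    (hΓNsymm : ∀ q ∈ V, ∀ a b : F, ΓN q a b = ΓN q b a)
    (hKoszulN : ∀ q ∈ V, ∀ a b c : F,
      h q (ΓN q a b) c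
        = (1 / 2) * ((fderiv ℝ h q a) b c + (fderiv ℝ h q b) a c - (fderiv ℝ h q c) a b)) :
    ∀ p ∈ O, ∀ u v : E, ∀ w : E,
      h (f p)
          (fderiv ℝ f p (ΓM p u v)
            - ΓN (f p) (fderiv ℝ f p u) (fderiv ℝ f p v)
            - fderiv ℝ (fderiv ℝ f) p u v)
          (fderiv ℝ f p w) = 0 :=
  pullback_christoffel_orthogonal_general O V hO hV f hf hfO h hh hhsymm g hgdef ΓM hKoszulM ΓN
    hKoszulN
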